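/- The map φ̃ : V × ZMod 2 → V × ZMod 2 given by φ̃(v,i) = (r(v),i) is a graph automorphism of the strong product Γ[K₂] with φ̃ ∘ φ̃ = id and φ̃ ≠ id, and it interchanges only non-adjacent vertices: for every vertex (v,i) with φ̃(v,i) ≠ (v,i), the vertices (v,i) and (r(v),i) are not adjacent in Γ[K₂]. -/

import Mathlib

open SimpleGraph Polynomial Matrix

/-- `V` is the 5-dimensional vector space over `GF(3)`. -/
abbrev V : Type := Fin 5 → ZMod 3

/-- The specific parity-check matrix of the ternary Golay code. -/
def H : Matrix (Fin 5) (Fin 11) (ZMod 3) :=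
  !![1,1,1,2,2,0,1,0,0,0,0;
     1,1,2,1,0,2,0,1,0,0,0;
     1,2,1,0,1,2,0,0,1,0,0;
     1,2,0,1,2,1,0,0,0,1,0;
     1,0,2,2,1,1,0,0,0,0,1]

/-- `S₂ = {±x₁, …, ±x₁₁}` where `x₁, …, x₁₁` are the columns of `H`. -/
def S2 : Set V := {v | ∃ j : Fin 11, v = (fun i => H i j) ∨ v = -(fun i => H i j)}

instance : DecidablePred (· ∈ S2) := fun v =>
  decidable_of_iff (∃ j : Fin 11, v = (fun i => H i j) ∨ v = -(fun i => H i j)) Iff.rfl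

/-- The reversal map sending `(a,b,c,d,e)` to `(e,d,c,b,a)`. -/
def r (v : V) : V := fun i => v i.rev

/-- The Berlekamp–Van Lint–Seidel graph `Γ = Cay(V, S₂)`:
`u` is adjacent to `v` iff `u ≠ v` and `u - v ∈ S₂`. -/
def Γ : SimpleGraph V where
  Adj u v := u ≠ v ∧ u - v ∈ S2
  symm := ⟨by
    rintro u v ⟨hne, j, hj⟩
    refine ⟨hne.symm, j, ?_⟩
    rcases hj with h | h
    · right; rw [← neg_sub, h]
    · left; rw [← neg_sub, h, neg_neg]⟩
  loopless := ⟨fun v h => h.1 rfl⟩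

instance : DecidableRel Γ.Adj := fun u v =>
  decidable_of_iff (u ≠ v ∧ u - v ∈ S2) Iff.rfl

/-- The strong product `Γ[K₂]` of the Berlekamp–Van Lint–Seidel graph with an edge:
`(u,i)` is adjacent to `(v,j)` iff `(u,i) ≠ (v,j)` and (`u = v` or `u` adjacent to `v` in `Γ`). -/
def ΓK2 : SimpleGraph (V × ZMod 2) where
  Adj p q := p ≠ q ∧ (p.1 = q.1 ∨ Γ.Adj p.1 q.1)
  symm := ⟨by
    rintro p q ⟨h1, h2⟩
    exact ⟨h1.symm, h2.imp Eq.symm fun h => h.symm⟩⟩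
  loopless := ⟨fun p h => h.1 rfl⟩

instance : DecidableRel ΓK2.Adj := fun p q =>
  decidable_of_iff (p ≠ q ∧ (p.1 = q.1 ∨ Γ.Adj p.1 q.1)) Iff.rfl

/-- The induced map `φ̃(v, i) = (r v, i)` on `V × ZMod 2`. -/
def φt : V × ZMod 2 → V × ZMod 2 := fun p => (r p.1, p.2)

/-!
Reversal permutes the columns of `H` up to sign, so it preserves `S₂`; being linear, it is an
automorphism of the Cayley graph `Γ`, and acting on the first factor it is one of `Γ[K₂]`.
A vertex `(v, i)` and its image differ by `w = v - r v`, which satisfies `r w = -w`; no element of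
`S₂` does (checked on the eleven columns), so `v` and `r v` are never adjacent in `Γ`.
-/

lemma r_involutive : Function.Involutive r := fun v => by
  funext i; simp [r, Fin.rev_rev]

lemma r_sub (u v : V) : r (u - v) = r u - r v := rfl

lemma r_neg (v : V) : r (-v) = -r v := rfl

lemma exists_r_ne : ∃ v : V, r v ≠ v := ⟨Pi.single 0 1, by decide⟩

lemma neg_mem_S2 {v : V} (hv : v ∈ S2) : -v ∈ S2 := by
  obtain ⟨j, h | h⟩ := hv
  · exact ⟨j, Or.inr (by rw [h])⟩
  · exact ⟨j, Or.inl (by rw [h, neg_neg])⟩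

lemma r_column_mem_S2 : ∀ j : Fin 11, r (fun i => H i j) ∈ S2 := by decide

lemma r_column_ne_neg : ∀ j : Fin 11, r (fun i => H i j) ≠ -(fun i => H i j) := by decide

lemma r_mem_S2 {v : V} (hv : v ∈ S2) : r v ∈ S2 := by
  obtain ⟨j, rfl | rfl⟩ := hv
  · exact r_column_mem_S2 j
  · exact r_neg _ ▸ neg_mem_S2 (r_column_mem_S2 j)

lemma r_ne_neg_of_mem_S2 {w : V} (hw : w ∈ S2) : r w ≠ -w := by
  obtain ⟨j, rfl | rfl⟩ := hw
  · exact r_column_ne_neg j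
  · exact fun h => r_column_ne_neg j (neg_injective h)

lemma sub_r_not_mem_S2 (v : V) : v - r v ∉ S2 := fun h =>
  r_ne_neg_of_mem_S2 h (by rw [r_sub, r_involutive, neg_sub])

def reversalIso : Γ ≃g Γ where
  toEquiv := r_involutive.toPerm r
  map_rel_iff' {u v} := by
    change Γ.Adj (r u) (r v) ↔ Γ.Adj u v
    refine and_congr r_involutive.injective.ne_iff ⟨fun h => ?_, r_mem_S2⟩
    simpa only [r_involutive _, r_sub] using r_mem_S2 h

lemma not_adj_r (v : V) : ¬ Γ.Adj v (r v) := fun h => sub_r_not_mem_S2 v h.2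

lemma ΓK2_adj_map_fst_iff (φ : Γ ≃g Γ) (p q : V × ZMod 2) :
    ΓK2.Adj (φ p.1, p.2) (φ q.1, q.2) ↔ ΓK2.Adj p q := by
  change _ ∧ _ ↔ _ ∧ _
  simp only [ne_eq, Prod.ext_iff, φ.injective.eq_iff, φ.map_adj_iff]

/-- `φ̃` is a graph automorphism of `Γ[K₂]` with `φ̃ ∘ φ̃ = id` and `φ̃ ≠ id` which
interchanges only non-adjacent vertices. -/
theorem induced_reversal_is_order_two_automorphism_interchanging_only_nonadjacent :
    (∀ p q : V × ZMod 2, ΓK2.Adj (φt p) (φt q) ↔ ΓK2.Adj p q) ∧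
    (φt ∘ φt = id) ∧ (φt ≠ id) ∧
    (∀ p : V × ZMod 2, φt p ≠ p → ¬ ΓK2.Adj p (φt p)) := by
  refine ⟨ΓK2_adj_map_fst_iff reversalIso, ?_, ?_, ?_⟩
  · funext p
    exact Prod.ext (r_involutive p.1) rfl
  · obtain ⟨v, hv⟩ := exists_r_ne
    exact fun h => hv (congrArg Prod.fst (congrFun h (v, 0)))
  · rintro ⟨v, i⟩ hne ⟨-, hv | hv⟩
    · exact hne (Prod.ext hv.symm rfl)
    · exact not_adj_r v hv
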